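/- arXiv:2204.12446 — 2 statements merged into one kernel-verified Lean document; each statement's English description precedes it below -/
import Mathlib

section
/- For step sizes η_t ≤ C/t with Cβ > 0, one has ∑_{t=1}^T η_t ∏_{j=t+1}^T (1 + β η_j)^2 ≤ C e^{2Cβ} T^{2Cβ} (1 + 1/(2Cβ)). -/
open Real Finset

/-! Since `1 + x ≤ eˣ`, the product after step `t` is at most `exp (2β ∑_{j>t} η_j)`, and
`∑_{j=t+1}^T 1/j ≤ log (T/t)` turns this into `(T/t)^{2Cβ}`. So the `t`-th summand is at most
`C T^{2Cβ} t^{-1-2Cβ}`, and comparison with `∫_1^∞ x^{-1-2Cβ} dx` bounds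
`∑_t t^{-1-2Cβ}` by `1 + 1/(2Cβ)`. -/

theorem AntitoneOn.sum_Icc_succ_le_integral {f : ℝ → ℝ} {a b : ℕ} (hab : a ≤ b)
    (hf : AntitoneOn f (Set.Icc a b)) :
    ∑ j ∈ Icc (a + 1) b, f j ≤ ∫ x in (a : ℝ)..b, f x := by
  rw [← Ico_add_one_right_eq_Icc, ← sum_Ico_add']
  exact hf.sum_le_integral_Ico hab

theorem sum_Icc_inv_le_log_sub {t T : ℕ} (ht : 0 < t) (htT : t ≤ T) :
    ∑ j ∈ Icc (t + 1) T, (j : ℝ)⁻¹ ≤ log T - log t := by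
  have ht' : (0 : ℝ) < t := by exact_mod_cast ht
  have hT' : (0 : ℝ) < T := by exact_mod_cast ht.trans_le htT
  calc ∑ j ∈ Icc (t + 1) T, (j : ℝ)⁻¹
      ≤ ∫ x in (t : ℝ)..T, x⁻¹ :=
        (inv_antitoneOn_Icc_right ht').sum_Icc_succ_le_integral htT
    _ = log T - log t := by
        rw [integral_inv, log_div hT'.ne' ht'.ne']
        exact Set.notMem_uIcc_of_lt ht' hT'

theorem sum_Icc_rpow_neg_sub_one_le {s : ℝ} (hs : 0 < s) (T : ℕ) :
    ∑ t ∈ Icc 1 T, (t : ℝ) ^ (-s - 1) ≤ 1 + 1 / s := by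
  rcases Nat.eq_zero_or_pos T with rfl | hT
  · rw [Icc_eq_empty_of_lt zero_lt_one, sum_empty]
    positivity
  have hmono : AntitoneOn (fun x : ℝ ↦ x ^ (-s - 1)) (Set.Icc (1 : ℕ) T) :=
    (antitoneOn_rpow_Ioi_of_exponent_nonpos (by linarith)).mono
      fun x hx ↦ lt_of_lt_of_le (by norm_num) hx.1
  have hT' : (1 : ℝ) ≤ T := by exact_mod_cast hT
  have htail : ∑ t ∈ Icc (1 + 1) T, (t : ℝ) ^ (-s - 1) ≤ 1 / s :=
    calc ∑ t ∈ Icc (1 + 1) T, (t : ℝ) ^ (-s - 1)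
        ≤ ∫ x in ((1 : ℕ) : ℝ)..T, x ^ (-s - 1) := hmono.sum_Icc_succ_le_integral hT
      _ = (1 - (T : ℝ) ^ (-s)) / s := by
        rw [integral_rpow]
        · simp only [sub_add_cancel, Nat.cast_one, one_rpow]
          ring
        · exact Or.inr ⟨by linarith, Set.notMem_uIcc_of_lt (by norm_num) (by exact_mod_cast hT)⟩
      _ ≤ 1 / s := by gcongr; simpa using rpow_nonneg (Nat.cast_nonneg T) (-s)
  rw [← add_sum_Ioc_eq_sum_Icc hT, ← Icc_add_one_left_eq_Ioc]
  simpa using htail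

theorem prod_one_add_sq_le_exp {ι : Type*} (s : Finset ι) {x : ι → ℝ}
    (hx : ∀ i ∈ s, 0 ≤ x i) : ∏ i ∈ s, (1 + x i) ^ 2 ≤ exp (2 * ∑ i ∈ s, x i) :=
  calc ∏ i ∈ s, (1 + x i) ^ 2
      ≤ ∏ i ∈ s, exp (x i) ^ 2 := by
        refine prod_le_prod (fun i hi ↦ by positivity) fun i hi ↦ ?_
        have := hx i hi
        gcongr
        linarith [add_one_le_exp (x i)]
    _ = exp (2 * ∑ i ∈ s, x i) := by
        rw [mul_sum, exp_sum]
        exact prod_congr rfl fun i _ ↦ by rw [← exp_nat_mul]; norm_num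

theorem mul_prod_one_add_mul_sq_le {β C : ℝ} {T t : ℕ} {η : ℕ → ℝ} (hβ : 0 ≤ β) (hC : 0 ≤ C)
    (hη0 : ∀ j ∈ Icc 1 T, 0 ≤ η j) (hη : ∀ j ∈ Icc 1 T, η j ≤ C / j) (ht : t ∈ Icc 1 T) :
    η t * ∏ j ∈ Icc (t + 1) T, (1 + β * η j) ^ 2 ≤
      C * (T : ℝ) ^ (2 * C * β) * (t : ℝ) ^ (-(2 * C * β) - 1) := by
  set s := 2 * C * β with hs
  obtain ⟨ht1, htT⟩ := mem_Icc.mp ht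
  have ht' : (0 : ℝ) < t := by exact_mod_cast ht1
  have hT' : (0 : ℝ) < T := by exact_mod_cast ht1.trans htT
  have htail : Icc (t + 1) T ⊆ Icc 1 T := Icc_subset_Icc_left (by omega)
  have hsum : ∑ j ∈ Icc (t + 1) T, η j ≤ C * (log T - log t) :=
    calc ∑ j ∈ Icc (t + 1) T, η j
        ≤ ∑ j ∈ Icc (t + 1) T, C * (j : ℝ)⁻¹ := sum_le_sum fun j hj ↦ hη j (htail hj)
      _ ≤ C * (log T - log t) := by
        rw [← mul_sum]
        exact mul_le_mul_of_nonneg_left (sum_Icc_inv_le_log_sub ht1 htT) hC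
  have hprod : ∏ j ∈ Icc (t + 1) T, (1 + β * η j) ^ 2 ≤ (T : ℝ) ^ s * (t : ℝ) ^ (-s) :=
    calc ∏ j ∈ Icc (t + 1) T, (1 + β * η j) ^ 2
        ≤ exp (2 * ∑ j ∈ Icc (t + 1) T, β * η j) :=
          prod_one_add_sq_le_exp _ fun j hj ↦ mul_nonneg hβ (hη0 j (htail hj))
      _ ≤ exp (s * (log T - log t)) := by
        rw [exp_le_exp, ← mul_sum, hs]
        nlinarith
      _ = (T : ℝ) ^ s * (t : ℝ) ^ (-s) := by
        rw [mul_sub, exp_sub, rpow_neg ht'.le, rpow_def_of_pos hT', rpow_def_of_pos ht',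
          mul_comm s, mul_comm s, div_eq_mul_inv]
  calc η t * ∏ j ∈ Icc (t + 1) T, (1 + β * η j) ^ 2
      ≤ C / t * ((T : ℝ) ^ s * (t : ℝ) ^ (-s)) :=
        mul_le_mul (hη t ht) hprod (prod_nonneg fun j hj ↦ by have := hη0 j (htail hj); positivity)
          ((hη0 t ht).trans (hη t ht))
    _ = C * (T : ℝ) ^ s * (t : ℝ) ^ (-s - 1) := by
        rw [rpow_sub_one ht'.ne']
        ring

theorem sum_prod_decreasing_step_bound_general (β C : ℝ) (T : ℕ) (η : ℕ → ℝ)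
    (hβ : 0 < β) (hC : 0 < C)
    (hη0 : ∀ t ∈ Finset.Icc 1 T, 0 ≤ η t)
    (hη : ∀ t ∈ Finset.Icc 1 T, η t ≤ C / t) :
    ∑ t ∈ Finset.Icc 1 T, η t * ∏ j ∈ Finset.Icc (t + 1) T, (1 + β * η j) ^ 2 ≤
      C * Real.exp (2 * C * β) * (T : ℝ) ^ (2 * C * β) * (1 + 1 / (2 * C * β)) := by
  have hs : 0 < 2 * C * β := by positivity
  calc ∑ t ∈ Icc 1 T, η t * ∏ j ∈ Icc (t + 1) T, (1 + β * η j) ^ 2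
      ≤ ∑ t ∈ Icc 1 T, C * (T : ℝ) ^ (2 * C * β) * (t : ℝ) ^ (-(2 * C * β) - 1) :=
        sum_le_sum fun t ht ↦ mul_prod_one_add_mul_sq_le hβ.le hC.le hη0 hη ht
    _ ≤ C * (T : ℝ) ^ (2 * C * β) * (1 + 1 / (2 * C * β)) := by
        rw [← mul_sum]
        gcongr
        exact sum_Icc_rpow_neg_sub_one_le hs T
    _ ≤ C * exp (2 * C * β) * (T : ℝ) ^ (2 * C * β) * (1 + 1 / (2 * C * β)) := by
        gcongr ?_ * _ * _
        exact le_mul_of_one_le_right hC.le (one_le_exp hs.le)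

theorem sum_prod_decreasing_step_bound (β C : ℝ) (T : ℕ) (η : ℕ → ℝ)
    (hβ : 0 < β) (hC : 0 < C) (hT : 1 ≤ T)
    (hη0 : ∀ t ∈ Finset.Icc 1 T, 0 ≤ η t)
    (hη : ∀ t ∈ Finset.Icc 1 T, η t ≤ C / t) :
    ∑ t ∈ Finset.Icc 1 T, η t * ∏ j ∈ Finset.Icc (t + 1) T, (1 + β * η j) ^ 2 ≤
      C * Real.exp (2 * C * β) * (T : ℝ) ^ (2 * C * β) * (1 + 1 / (2 * C * β)) :=
  sum_prod_decreasing_step_bound_general β C T η hβ hC hη0 hη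
end

section
/- For step sizes η_t ≤ C/t with Cβ > 0, one has ∑_{t=1}^T η_t ∏_{j=t+1}^T (1 + β η_j)^2 ≤ C e^{2Cβ} T^{2Cβ} log(eT), where log denotes the natural logarithm. -/
/-!
Since `1 + x ≤ exp x`, every tail product is at most `exp (2β S)`, where `S = ∑ η_t`, so the whole
sum is at most `S exp (2β S)`. The harmonic bound gives `S ≤ C log (eT)`, and
`exp (2Cβ log (eT)) = e^{2Cβ} T^{2Cβ}`.
-/

open Real Finset

lemma sum_Icc_inv_le_log_exp_one_mul (n : ℕ) (hn : 1 ≤ n) :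
    ∑ t ∈ Icc 1 n, (t : ℝ)⁻¹ ≤ log (exp 1 * n) := by
  rw [log_mul (exp_ne_zero 1) (by positivity), log_exp]
  simpa [harmonic_eq_sum_Icc] using harmonic_le_one_add_log n

lemma sum_Icc_le_mul_log_of_le_div {η : ℕ → ℝ} {C : ℝ} {n : ℕ} (hC : 0 ≤ C) (hn : 1 ≤ n)
    (hη : ∀ t ∈ Icc 1 n, η t ≤ C / t) :
    ∑ t ∈ Icc 1 n, η t ≤ C * log (exp 1 * n) :=
  calc ∑ t ∈ Icc 1 n, η t ≤ ∑ t ∈ Icc 1 n, C * (t : ℝ)⁻¹ := sum_le_sum hη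
    _ = C * ∑ t ∈ Icc 1 n, (t : ℝ)⁻¹ := (mul_sum _ _ _).symm
    _ ≤ C * log (exp 1 * n) :=
      mul_le_mul_of_nonneg_left (sum_Icc_inv_le_log_exp_one_mul n hn) hC

lemma prod_one_add_sq_le_exp_two_mul_sum {ι : Type*} (s : Finset ι) {f : ι → ℝ}
    (hf : ∀ i ∈ s, 0 ≤ f i) :
    ∏ i ∈ s, (1 + f i) ^ 2 ≤ exp (2 * ∑ i ∈ s, f i) :=
  calc ∏ i ∈ s, (1 + f i) ^ 2 = (∏ i ∈ s, (1 + f i)) ^ 2 := prod_pow _ _ _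
    _ ≤ exp (∑ i ∈ s, f i) ^ 2 := by
      gcongr
      · exact prod_nonneg fun i hi ↦ by linarith [hf i hi]
      · rw [exp_sum]
        exact prod_le_prod (fun i hi ↦ by linarith [hf i hi])
          fun i _ ↦ (add_comm 1 (f i)).le.trans (add_one_le_exp _)
    _ = exp (2 * ∑ i ∈ s, f i) := by rw [← exp_nat_mul]; norm_num

lemma sum_mul_prod_Icc_one_add_sq_le {η : ℕ → ℝ} {β : ℝ} {n : ℕ} (hβ : 0 ≤ β)
    (hη : ∀ t ∈ Icc 1 n, 0 ≤ η t) :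
    ∑ t ∈ Icc 1 n, η t * ∏ j ∈ Icc (t + 1) n, (1 + β * η j) ^ 2 ≤
      (∑ t ∈ Icc 1 n, η t) * exp (2 * β * ∑ t ∈ Icc 1 n, η t) := by
  rw [sum_mul]
  refine sum_le_sum fun t ht ↦ mul_le_mul_of_nonneg_left ?_ (hη t ht)
  have htail : Icc (t + 1) n ⊆ Icc 1 n := Icc_subset_Icc_left (by omega)
  calc ∏ j ∈ Icc (t + 1) n, (1 + β * η j) ^ 2
      ≤ exp (2 * ∑ j ∈ Icc (t + 1) n, β * η j) :=
        prod_one_add_sq_le_exp_two_mul_sum _ fun j hj ↦ mul_nonneg hβ (hη j (htail hj))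
    _ ≤ exp (2 * β * ∑ t ∈ Icc 1 n, η t) := by
      rw [← mul_sum, ← mul_assoc]
      gcongr
      exact fun j hj _ ↦ hη j hj

theorem sum_prod_decreasing_step_bound_log (β C : ℝ) (T : ℕ) (η : ℕ → ℝ)
    (hβ : 0 < β) (hC : 0 < C) (hT : 1 ≤ T)
    (hη0 : ∀ t ∈ Finset.Icc 1 T, 0 ≤ η t)
    (hη : ∀ t ∈ Finset.Icc 1 T, η t ≤ C / t) :
    ∑ t ∈ Finset.Icc 1 T, η t * ∏ j ∈ Finset.Icc (t + 1) T, (1 + β * η j) ^ 2 ≤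
      C * Real.exp (2 * C * β) * (T : ℝ) ^ (2 * C * β) *
        Real.log (Real.exp 1 * T) := by
  have hS0 : 0 ≤ ∑ t ∈ Icc 1 T, η t := sum_nonneg hη0
  have hS : ∑ t ∈ Icc 1 T, η t ≤ C * log (exp 1 * T) :=
    sum_Icc_le_mul_log_of_le_div hC.le hT hη
  have hexp :
      exp (2 * β * (C * log (exp 1 * T))) = exp (2 * C * β) * (T : ℝ) ^ (2 * C * β) := by
    rw [← exp_one_rpow (2 * C * β), ← mul_rpow (exp_pos 1).le T.cast_nonneg,
      rpow_def_of_pos (by positivity)]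
    congr 1
    ring
  calc _ ≤ (∑ t ∈ Icc 1 T, η t) * exp (2 * β * ∑ t ∈ Icc 1 T, η t) :=
        sum_mul_prod_Icc_one_add_sq_le hβ.le hη0
    _ ≤ C * log (exp 1 * T) * exp (2 * β * (C * log (exp 1 * T))) := by
        gcongr
        exact hS0.trans hS
    _ = _ := by rw [hexp]; ring
end
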